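/- In the example pair of mapper cosheaves where $F$ has two tails $x, z$ at level $\sigma_1$ merging at distance 3 (in the 2-thickening the components $[x]$ and $[z]$ satisfy $d_{S_{\sigma_1}^2}^F([x],[z]) = 3$), and $G$ has a single component $y$ at that level, every 1-assignment $(\phi,\psi)$ has loss $L_B(\phi,\psi) \geq 2$, hence the computed bound satisfies $1 + L_B(\phi,\psi) \geq 3$, while $d_I(F,G) = 2$. Thus the optimal bound for $n=1$ strictly exceeds the interleaving distance. -/

import Mathlib

variable {α : Type*} [Preorder α]

/-- The up-set of a subset of a poset. -/
def upSet (S : Set α) : Set α := {u | ∃ v ∈ S, v ≤ u}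

/-- The down-set of a subset of a poset. -/
def downSet (S : Set α) : Set α := {u | ∃ v ∈ S, u ≤ v}

/-- The `n`-fold Alexandrov thickening `S^n`. -/
def thicken (S : Set α) : ℕ → Set α
  | 0 => S
  | n + 1 => downSet (upSet (thicken S n))

lemma subset_downUp (S : Set α) : S ⊆ downSet (upSet S) :=
  fun u hu => ⟨u, ⟨u, hu, le_refl u⟩, le_refl u⟩

lemma self_subset_thicken (S : Set α) : ∀ n : ℕ, S ⊆ thicken S n
  | 0 => Set.Subset.rfl
  | n + 1 => (self_subset_thicken S n).trans (subset_downUp _)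

lemma thicken_le (S : Set α) {m n : ℕ} (h : m ≤ n) : thicken S m ⊆ thicken S n := by
  induction h with
  | refl => exact Set.Subset.rfl
  | step _ ih => exact ih.trans (subset_downUp _)

lemma thicken_subset {S T : Set α} (h : S ⊆ T) : ∀ n : ℕ, thicken S n ⊆ thicken T n := by
  intro n
  induction n with
  | zero => exact h
  | succ n ih =>
    rintro u ⟨v, ⟨w, hw, hwv⟩, huv⟩
    exact ⟨v, ⟨w, ih hw, hwv⟩, huv⟩

lemma thicken_thicken (S : Set α) (m : ℕ) :
    ∀ n : ℕ, thicken (thicken S m) n = thicken S (m + n)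
  | 0 => rfl
  | n + 1 => by
    show downSet (upSet (thicken (thicken S m) n)) = downSet (upSet (thicken S (m + n)))
    rw [thicken_thicken S m n]
/-- A `Set`-valued functor on the Alexandrov-open sets of the poset `α`
(the data of a mapper cosheaf). -/
structure MapperCosheaf (α : Type*) [Preorder α] where
  obj : Set α → Type*
  map : ∀ ⦃S T : Set α⦄, S ⊆ T → obj S → obj T
  map_id : ∀ (S : Set α) (a : obj S), map (Set.Subset.refl S) a = a
  map_comp : ∀ ⦃S T U : Set α⦄ (h₁ : S ⊆ T) (h₂ : T ⊆ U) (a : obj S),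
      map h₂ (map h₁ a) = map (h₁.trans h₂) a

/-- The distance `d_S^F(A,B)`: the least `k` with
`F[S ⊆ S^k](A) = F[S ⊆ S^k](B)`, or `∞` if none exists. -/
noncomputable def fdist (F : MapperCosheaf α) (S : Set α) (A B : F.obj S) : ℕ∞ :=
  sInf {x : ℕ∞ | ∃ k : ℕ, x = (k : ℕ∞) ∧
    F.map (self_subset_thicken S k) A = F.map (self_subset_thicken S k) B}

/-- An `n`-interleaving between two mapper cosheaves. -/
def IsInterleaving (F G : MapperCosheaf α) (n : ℕ) : Prop :=
  ∃ (φ : ∀ S : Set α, F.obj S → G.obj (thicken S n))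
    (ψ : ∀ S : Set α, G.obj S → F.obj (thicken S n)),
    (∀ ⦃S T : Set α⦄, downSet S = S → downSet T = T → ∀ (h : S ⊆ T) (a : F.obj S),
        G.map (thicken_subset h n) (φ S a) = φ T (F.map h a)) ∧
    (∀ ⦃S T : Set α⦄, downSet S = S → downSet T = T → ∀ (h : S ⊆ T) (a : G.obj S),
        F.map (thicken_subset h n) (ψ S a) = ψ T (G.map h a)) ∧
    (∀ S : Set α, downSet S = S → ∀ a : F.obj S,
        F.map (thicken_thicken S n n).subset (ψ (thicken S n) (φ S a)) =
          F.map (self_subset_thicken S (n + n)) a) ∧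
    (∀ S : Set α, downSet S = S → ∀ a : G.obj S,
        G.map (thicken_thicken S n n).subset (φ (thicken S n) (ψ S a)) =
          G.map (self_subset_thicken S (n + n)) a)

/-- The interleaving distance between mapper cosheaves. -/
noncomputable def interleavingDist (F G : MapperCosheaf α) : ℕ∞ :=
  sInf {x : ℕ∞ | ∃ n : ℕ, x = (n : ℕ∞) ∧ IsInterleaving F G n}
/-- Ceiling of half of an extended natural number. -/
noncomputable def ceilHalf (d : ℕ∞) : ℕ∞ := WithTop.map (fun k => (k + 1) / 2) d

/-- The loss `L_B(φ,ψ)` of an `n`-assignment: the supremum over all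
parallelogram and triangle diagram losses. -/
noncomputable def assignmentLoss (F G : MapperCosheaf α) (n : ℕ)
    (φ : ∀ S : Set α, F.obj S → G.obj (thicken S n))
    (ψ : ∀ S : Set α, G.obj S → F.obj (thicken S n)) : ℕ∞ :=
  sSup {x : ℕ∞ |
    (∃ S T : Set α, downSet S = S ∧ downSet T = T ∧ ∃ (h : S ⊆ T) (a : F.obj S),
      x = fdist G (thicken T n) (φ T (F.map h a)) (G.map (thicken_subset h n) (φ S a))) ∨
    (∃ S T : Set α, downSet S = S ∧ downSet T = T ∧ ∃ (h : S ⊆ T) (a : G.obj S),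
      x = fdist F (thicken T n) (ψ T (G.map h a)) (F.map (thicken_subset h n) (ψ S a))) ∨
    (∃ S : Set α, downSet S = S ∧ ∃ a : F.obj S,
      x = ceilHalf (fdist F (thicken S (n + n))
            (F.map (self_subset_thicken S (n + n)) a)
            (F.map (thicken_thicken S n n).subset (ψ (thicken S n) (φ S a))))) ∨
    (∃ S : Set α, downSet S = S ∧ ∃ a : G.obj S,
      x = ceilHalf (fdist G (thicken S (n + n))
            (G.map (self_subset_thicken S (n + n)) a)
            (G.map (thicken_thicken S n n).subset (φ (thicken S n) (ψ S a)))))}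
/-- The vertex cover element `U_{σ_i} = ((i-1)δ, (i+1)δ)`. -/
def Usig (δ : ℝ) (i : ℤ) : Set ℝ := Set.Ioo (((i : ℝ) - 1) * δ) (((i : ℝ) + 1) * δ)

/-- The edge cover element `U_{τ_i} = (iδ, (i+1)δ)`. -/
def Utau (δ : ℝ) (i : ℤ) : Set ℝ := Set.Ioo ((i : ℝ) * δ) (((i : ℝ) + 1) * δ)

/-- The cover `𝒰` of `ℝ`. -/
def Cover (δ : ℝ) : Set (Set ℝ) := Set.range (Usig δ) ∪ Set.range (Utau δ)

/-- The cover poset `𝒰`, ordered by set inclusion. -/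
abbrev CoverPoset (δ : ℝ) := {U : Set ℝ // U ∈ Cover δ}

/-- `U_{σ_i}` as an element of the cover poset. -/
def sigC (δ : ℝ) (i : ℤ) : CoverPoset δ := ⟨Usig δ i, Or.inl ⟨i, rfl⟩⟩

/-- `U_{τ_i}` as an element of the cover poset. -/
def tauC (δ : ℝ) (i : ℤ) : CoverPoset δ := ⟨Utau δ i, Or.inr ⟨i, rfl⟩⟩

/-- Geometric realization `|S| = ⋃_{U ∈ S} U`. -/
def geomReal {δ : ℝ} (S : Set (CoverPoset δ)) : Set ℝ := {x | ∃ U ∈ S, x ∈ (U : Set ℝ)}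


/-!
`exF` and `exG` live on the zigzag cover poset `σᵢ ⊇ τᵢ ⊆ σᵢ₊₁`. Each consists of the connected
components of a doubled copy of the open set, with a tail (the upper copies of `τ₁, …, τ₅` for
`exF`, of `τ₃, …, τ₆` for `exG`) cut off from the rest until the set reaches beyond `6`
(resp. `7`). Over `Sσ₁` the tail class `x` of `exF` stays apart from the class `z` until the
`5`-thickening contains `σ₆`, which gives distance `3` in the `2`-thickening.

`exG` has a single component over `Sσ₁` and over its `1`-thickening, so any `1`-assignment (and
any `0`- or `1`-interleaving) sends `x` and `z` to the same class. As `d^F` is an ultrametric, one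
of the two triangle losses at `x`, `z` is then at least `⌈3/2⌉ = 2`, and no `0`- or
`1`-interleaving exists. Shifting tails right by two and back is a `2`-interleaving: the only tail
without partner, `τ₅`, is absorbed because the `1`-thickening of `τ₅` already contains `σ₆`.
-/

open Set

lemma downSet_downSet (S : Set α) : downSet (downSet S) = downSet S :=
  Subset.antisymm (fun _ ⟨_, ⟨w, hw, hvw⟩, huv⟩ => ⟨w, hw, huv.trans hvw⟩)
    fun u hu => ⟨u, hu, le_rfl⟩

lemma mem_thicken_one {S : Set α} {c d e : α} (he : e ∈ S) (hed : e ≤ d) (hcd : c ≤ d) :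
    c ∈ thicken S 1 :=
  ⟨d, ⟨e, he, hed⟩, hcd⟩

section Distance

lemma MapperCosheaf.map_thicken_eq_of_le (F : MapperCosheaf α) {S : Set α} {A B : F.obj S}
    {k l : ℕ} (hkl : k ≤ l)
    (h : F.map (self_subset_thicken S k) A = F.map (self_subset_thicken S k) B) :
    F.map (self_subset_thicken S l) A = F.map (self_subset_thicken S l) B := by
  rw [← F.map_comp (self_subset_thicken S k) (thicken_le S hkl), h, F.map_comp]

variable {F : MapperCosheaf α} {S : Set α}

lemma fdist_le_coe_iff {A B : F.obj S} {k : ℕ} :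
    fdist F S A B ≤ k ↔
      F.map (self_subset_thicken S k) A = F.map (self_subset_thicken S k) B := by
  refine ⟨fun h => ?_, fun h => sInf_le ⟨k, rfl, h⟩⟩
  obtain ⟨_, ⟨j, rfl, hj⟩, hjk⟩ :=
    sInf_lt_iff.mp (h.trans_lt (ENat.natCast_lt_natCast.mpr k.lt_succ_self))
  exact F.map_thicken_eq_of_le (Nat.lt_succ_iff.mp (ENat.natCast_lt_natCast.mp hjk)) hj

lemma fdist_comm (A B : F.obj S) : fdist F S A B = fdist F S B A := by
  unfold fdist
  congr 1
  ext x
  exact exists_congr fun k => and_congr_right fun _ => eq_comm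

lemma fdist_le_max (A B C : F.obj S) :
    fdist F S A C ≤ max (fdist F S A B) (fdist F S B C) := by
  cases hmax : max (fdist F S A B) (fdist F S B C) using ENat.recTopCoe with
  | top => exact le_top
  | coe k =>
    have hAB : fdist F S A B ≤ k := hmax ▸ le_max_left _ _
    have hBC : fdist F S B C ≤ k := hmax ▸ le_max_right _ _
    exact fdist_le_coe_iff.mpr ((fdist_le_coe_iff.mp hAB).trans (fdist_le_coe_iff.mp hBC))

end Distance

section Assignment

variable {F G : MapperCosheaf α} {S : Set α} {n : ℕ}

lemma ceilHalf_mono : Monotone ceilHalf :=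
  Monotone.withTop_map fun _ _ h => Nat.div_le_div_right (Nat.add_le_add_right h 1)

lemma ceilHalf_fdist_le_assignmentLoss (φ : ∀ S : Set α, F.obj S → G.obj (thicken S n))
    (ψ : ∀ S : Set α, G.obj S → F.obj (thicken S n)) (hS : downSet S = S)
    [Subsingleton (G.obj (thicken S n))] (a b : F.obj S) :
    ceilHalf (fdist F (thicken S (n + n)) (F.map (self_subset_thicken S (n + n)) a)
        (F.map (self_subset_thicken S (n + n)) b)) ≤ assignmentLoss F G n φ ψ := by
  set roundTrip := fun a => F.map (thicken_thicken S n n).subset (ψ (thicken S n) (φ S a))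
  have triangle : ∀ a, ceilHalf (fdist F (thicken S (n + n))
      (F.map (self_subset_thicken S (n + n)) a) (roundTrip a)) ≤ assignmentLoss F G n φ ψ :=
    fun a => le_sSup (Or.inr (Or.inr (Or.inl ⟨S, hS, a, rfl⟩)))
  have hround : roundTrip a = roundTrip b := by
    simp only [roundTrip, Subsingleton.elim (φ S a) (φ S b)]
  calc _ ≤ ceilHalf (max (fdist F _ (F.map (self_subset_thicken S (n + n)) a) (roundTrip a))
          (fdist F _ (roundTrip a) (F.map (self_subset_thicken S (n + n)) b))) :=
        ceilHalf_mono (fdist_le_max _ _ _)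
    _ = max _ _ := ceilHalf_mono.map_max
    _ ≤ _ := max_le (triangle a) (by rw [hround, fdist_comm]; exact triangle b)

lemma not_isInterleaving_of_subsingleton (hS : downSet S = S)
    [Subsingleton (G.obj (thicken S n))] {a b : F.obj S}
    (hab : F.map (self_subset_thicken S (n + n)) a ≠ F.map (self_subset_thicken S (n + n)) b) :
    ¬ IsInterleaving F G n := by
  rintro ⟨φ, ψ, -, -, hF, -⟩
  rw [← hF S hS a, ← hF S hS b, Subsingleton.elim (φ S a) (φ S b)] at hab
  exact hab rfl

lemma interleavingDist_eq_of_isInterleaving (h : IsInterleaving F G n)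
    (hlt : ∀ m < n, ¬ IsInterleaving F G m) : interleavingDist F G = n :=
  le_antisymm (sInf_le ⟨n, rfl, h⟩) <| le_sInf fun _ ⟨m, hm, hI⟩ =>
    hm ▸ ENat.natCast_le_natCast.mpr (not_lt.mp fun hmn => hlt m hmn hI)

end Assignment

section TailCosheaf

def IsTailCopy {β : Type*} (A : Set β) (p : β × Bool) : Prop := p.2 = true ∧ p.1 ∈ A

lemma not_isTailCopy_false {β : Type*} {A : Set β} (c : β) : ¬ IsTailCopy A (c, false) :=
  fun h => Bool.false_ne_true h.1

def TailLink (A Γ S : Set α) (v w : {p : α × Bool // p.1 ∈ S}) : Prop :=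
  (v.1.1 ≤ w.1.1 ∨ w.1.1 ≤ v.1.1) ∧ ((IsTailCopy A v.1 ↔ IsTailCopy A w.1) ∨ (S ∩ Γ).Nonempty)

/-- `S` goes to the connected components of the comparability graph on two copies of `S`, in
which the upper copy of `A` (the tail) is cut off from everything else unless `S` meets the
glue set `Γ`. -/
def tailCosheaf (A Γ : Set α) : MapperCosheaf α where
  obj S := ULift (Quot (TailLink A Γ S))
  map _ _ h a := ULift.up (Quot.map (fun v => ⟨v.1, h v.2⟩)
    (fun _ _ hvw => ⟨hvw.1, hvw.2.imp_right fun ⟨c, hc⟩ => ⟨c, h hc.1, hc.2⟩⟩) a.down)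
  map_id _ a := by
    obtain ⟨a⟩ := a
    induction a using Quot.ind
    rfl
  map_comp _ _ _ _ _ a := by
    obtain ⟨a⟩ := a
    induction a using Quot.ind
    rfl

namespace tailCosheaf

variable {A Γ S T : Set α} {p q : α × Bool}

def mk (A Γ : Set α) {S : Set α} (p : α × Bool) (hp : p.1 ∈ S) : (tailCosheaf A Γ).obj S :=
  ULift.up (Quot.mk _ ⟨p, hp⟩)

lemma map_mk (h : S ⊆ T) (hp : p.1 ∈ S) :
    (tailCosheaf A Γ).map h (mk A Γ p hp) = mk A Γ p (h hp) :=
  rfl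

lemma exists_eq_mk (a : (tailCosheaf A Γ).obj S) : ∃ p hp, a = mk A Γ p hp := by
  obtain ⟨a⟩ := a
  induction a using Quot.ind with
  | mk v => exact ⟨v.1, v.2, rfl⟩

lemma mk_congr {hp : p.1 ∈ S} (h : p = q) : mk A Γ p hp = mk A Γ q (h ▸ hp) := by
  subst h
  rfl

lemma mk_eq_mk_of_glued (hS : (S ∩ Γ).Nonempty) {hp : p.1 ∈ S} {hq : q.1 ∈ S}
    (hpq : p.1 ≤ q.1 ∨ q.1 ≤ p.1) : mk A Γ p hp = mk A Γ q hq :=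
  congrArg ULift.up (Quot.sound ⟨hpq, Or.inr hS⟩)

lemma mk_eq_mk_of_isTailCopy_iff {hp : p.1 ∈ S} {hq : q.1 ∈ S} (hpq : p.1 ≤ q.1 ∨ q.1 ≤ p.1)
    (h : IsTailCopy A p ↔ IsTailCopy A q) : mk A Γ p hp = mk A Γ q hq :=
  congrArg ULift.up (Quot.sound ⟨hpq, Or.inl h⟩)

lemma mk_eq_mk_false {hp : p.1 ∈ S} (h : ¬ IsTailCopy A p) :
    mk A Γ p hp = mk A Γ (p.1, false) hp :=
  mk_eq_mk_of_isTailCopy_iff (Or.inl le_rfl) (iff_of_false h (not_isTailCopy_false _))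

lemma mk_eq_mk_of_disjoint (hA : Disjoint S A) {hp : p.1 ∈ S} {hq : q.1 ∈ S}
    (hpq : p.1 ≤ q.1 ∨ q.1 ≤ p.1) : mk A Γ p hp = mk A Γ q hq :=
  mk_eq_mk_of_isTailCopy_iff hpq <|
    iff_of_false (fun h => hA.notMem_of_mem_left hp h.2) (fun h => hA.notMem_of_mem_left hq h.2)

lemma isTailCopy_iff_of_mk_eq (hS : Disjoint S Γ) {hp : p.1 ∈ S} {hq : q.1 ∈ S}
    (h : mk A Γ p hp = mk A Γ q hq) : IsTailCopy A p ↔ IsTailCopy A q :=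
  Iff.of_eq <| congrArg (fun a : (tailCosheaf A Γ).obj S => Quot.lift
    (fun v : {p : α × Bool // p.1 ∈ S} => IsTailCopy A v.1)
    (fun _ _ hvw => propext <| hvw.2.resolve_right fun ⟨_, hcS, hcΓ⟩ =>
      hS.notMem_of_mem_left hcS hcΓ) a.down) h

/-- The thickenings of a principal down-set are connected, so without tails they have a single
component. -/
lemma subsingleton_obj_thicken (x : α) {n : ℕ} (hA : Disjoint (thicken (downSet {x}) n) A) :
    Subsingleton ((tailCosheaf A Γ).obj (thicken (downSet {x}) n)) := by
  have hx : ∀ n, x ∈ thicken (downSet {x}) n :=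
    fun n => self_subset_thicken _ n ⟨x, rfl, le_rfl⟩
  suffices key : ∀ n, Disjoint (thicken (downSet {x}) n) A →
      ∀ p (hp : p.1 ∈ thicken (downSet {x}) n), mk A Γ p hp = mk A Γ (x, false) (hx n) by
    refine ⟨fun a b => ?_⟩
    obtain ⟨p, hp, rfl⟩ := exists_eq_mk a
    obtain ⟨q, hq, rfl⟩ := exists_eq_mk b
    rw [key n hA p hp, key n hA q hq]
  intro n
  induction n with
  | zero =>
    rintro hA p ⟨_, rfl, hpx⟩
    exact mk_eq_mk_of_disjoint hA (Or.inl hpx)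
  | succ n ih =>
    rintro hA p hp
    obtain ⟨d, ⟨e, he, hed⟩, hpd⟩ := hp
    have hd : d ∈ thicken (downSet {x}) (n + 1) := mem_thicken_one he hed le_rfl
    have he' : e ∈ thicken (downSet {x}) (n + 1) := thicken_le _ n.le_succ he
    calc mk A Γ p _ = mk A Γ (d, false) hd :=
          mk_eq_mk_of_disjoint hA (Or.inl hpd)
      _ = mk A Γ (e, false) he' := mk_eq_mk_of_disjoint hA (Or.inr hed)
      _ = (tailCosheaf A Γ).map (thicken_le _ n.le_succ) (mk A Γ (e, false) he) := rfl
      _ = _ := by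
        rw [ih (hA.mono_left (thicken_le _ n.le_succ)) _ he]
        rfl

end tailCosheaf

end TailCosheaf

section CoverPoset

variable {S : Set (CoverPoset 1)} {i j : ℤ}

lemma coe_sigC (i : ℤ) : (sigC 1 i : Set ℝ) = Ioo ((i : ℝ) - 1) (i + 1) := by
  simp [sigC, Usig]

lemma coe_tauC (i : ℤ) : (tauC 1 i : Set ℝ) = Ioo (i : ℝ) (i + 1) := by
  simp [tauC, Utau]

lemma CoverPoset.le_iff_subset {c d : CoverPoset 1} : c ≤ d ↔ (c : Set ℝ) ⊆ d := Iff.rfl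

lemma CoverPoset.eq_sigC_or_eq_tauC (c : CoverPoset 1) :
    (∃ i, c = sigC 1 i) ∨ ∃ i, c = tauC 1 i := by
  obtain ⟨U, ⟨i, rfl⟩ | ⟨i, rfl⟩⟩ := c
  exacts [Or.inl ⟨i, rfl⟩, Or.inr ⟨i, rfl⟩]

lemma tauC_le_sigC (i : ℤ) : tauC 1 i ≤ sigC 1 i := by
  rw [CoverPoset.le_iff_subset, coe_tauC, coe_sigC]
  exact Ioo_subset_Ioo (by linarith) le_rfl

lemma tauC_le_sigC_add_one (i : ℤ) : tauC 1 i ≤ sigC 1 (i + 1) := by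
  rw [CoverPoset.le_iff_subset, coe_tauC, coe_sigC]
  push_cast
  exact Ioo_subset_Ioo (by linarith) (by linarith)

lemma tauC_le_tauC_iff : tauC 1 i ≤ tauC 1 j ↔ i = j := by
  refine ⟨fun h => ?_, fun h => h ▸ le_rfl⟩
  rw [CoverPoset.le_iff_subset, coe_tauC, coe_tauC, Ioo_subset_Ioo_iff (by linarith)] at h
  exact_mod_cast (le_antisymm (by linarith [h.2]) h.1 : (i : ℝ) = j)

lemma tauC_injective : Function.Injective (tauC 1) :=
  fun _ _ h => tauC_le_tauC_iff.mp h.le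

lemma sigC_le_sigC_iff : sigC 1 i ≤ sigC 1 j ↔ i = j := by
  refine ⟨fun h => ?_, fun h => h ▸ le_rfl⟩
  rw [CoverPoset.le_iff_subset, coe_sigC, coe_sigC, Ioo_subset_Ioo_iff (by linarith)] at h
  exact_mod_cast (le_antisymm (by linarith [h.2]) (by linarith [h.1]) : (i : ℝ) = j)

lemma not_sigC_le_tauC : ¬ sigC 1 i ≤ tauC 1 j := by
  rw [CoverPoset.le_iff_subset, coe_sigC, coe_tauC, Ioo_subset_Ioo_iff (by linarith)]
  intro h
  linarith [h.1, h.2]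

lemma tauC_le_sigC_iff : tauC 1 i ≤ sigC 1 j ↔ j = i ∨ j = i + 1 := by
  refine ⟨fun h => ?_, ?_⟩
  · rw [CoverPoset.le_iff_subset, coe_tauC, coe_sigC, Ioo_subset_Ioo_iff (by linarith)] at h
    have h₁ : j ≤ i + 1 := by exact_mod_cast (by linarith [h.1] : (j : ℝ) ≤ i + 1)
    have h₂ : i ≤ j := by exact_mod_cast (by linarith [h.2] : (i : ℝ) ≤ j)
    omega
  · rintro (rfl | rfl)
    exacts [tauC_le_sigC j, tauC_le_sigC_add_one i]

lemma subset_Ioo_of_le {c d : CoverPoset 1} {a b : ℝ} (hcd : c ≤ d) (hc : (c : Set ℝ) ⊆ Ioo a b) :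
    (d : Set ℝ) ⊆ Ioo (a - 1) (b + 1) := by
  rcases c.eq_sigC_or_eq_tauC with ⟨i, rfl⟩ | ⟨i, rfl⟩ <;>
    rcases d.eq_sigC_or_eq_tauC with ⟨j, rfl⟩ | ⟨j, rfl⟩
  · obtain rfl := sigC_le_sigC_iff.mp hcd
    exact hc.trans (Ioo_subset_Ioo (by linarith) (by linarith))
  · exact absurd hcd not_sigC_le_tauC
  · rw [coe_tauC, Ioo_subset_Ioo_iff (by linarith)] at hc
    rw [coe_sigC]
    rcases tauC_le_sigC_iff.mp hcd with rfl | rfl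
    · exact Ioo_subset_Ioo (by linarith) (by linarith)
    · push_cast
      exact Ioo_subset_Ioo (by linarith) (by linarith)
  · obtain rfl := tauC_le_tauC_iff.mp hcd
    exact hc.trans (Ioo_subset_Ioo (by linarith) (by linarith))

lemma thicken_subset_Ioo {a b : ℝ} (hS : ∀ c ∈ S, (c : Set ℝ) ⊆ Ioo a b) (n : ℕ) :
    ∀ c ∈ thicken S n, (c : Set ℝ) ⊆ Ioo (a - n) (b + n) := by
  induction n with
  | zero => simpa [thicken] using hS
  | succ n ih =>
    rintro c ⟨d, ⟨e, he, hed⟩, hcd⟩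
    push_cast
    rw [sub_add_eq_sub_sub, ← add_assoc]
    exact (CoverPoset.le_iff_subset.mp hcd).trans (subset_Ioo_of_le hed (ih e he))

lemma tauC_mem_thicken_of_abs_sub_le (h : tauC 1 i ∈ S) {n : ℕ} (hij : |j - i| ≤ n) :
    tauC 1 j ∈ thicken S n := by
  have step : ∀ k : ℕ, tauC 1 (i + k) ∈ thicken S k ∧ tauC 1 (i - k) ∈ thicken S k := by
    intro k
    induction k with
    | zero => simpa [thicken] using h
    | succ k ih =>
      exact ⟨mem_thicken_one (d := sigC 1 (i + k + 1)) ih.1 (tauC_le_sigC_iff.mpr (by omega))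
          (tauC_le_sigC_iff.mpr (by omega)),
        mem_thicken_one (d := sigC 1 (i - k)) ih.2 (tauC_le_sigC_iff.mpr (by omega))
          (tauC_le_sigC_iff.mpr (by omega))⟩
  rw [abs_sub_le_iff] at hij
  obtain ⟨m, hmn, rfl | rfl⟩ : ∃ m : ℕ, m ≤ n ∧ (j = i + m ∨ j = i - m) :=
    ⟨(j - i).natAbs, by omega, by omega⟩
  exacts [thicken_le S hmn (step m).1, thicken_le S hmn (step m).2]

end CoverPoset

section Shift

open tailCosheaf

variable {s s' : Set ℤ} {k k' i j : ℤ} {A Γ Γ' : Set (CoverPoset 1)} {S T : Set (CoverPoset 1)}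
  {p : CoverPoset 1 × Bool}

lemma isTailCopy_image_tauC_iff :
    IsTailCopy (tauC 1 '' s) p ↔ ∃ i ∈ s, p = (tauC 1 i, true) := by
  constructor
  · rintro ⟨hp, i, hi, hip⟩
    exact ⟨i, hi, Prod.ext hip.symm hp⟩
  · rintro ⟨i, hi, rfl⟩
    exact ⟨rfl, i, hi, rfl⟩

lemma isTailCopy_tauC_iff : IsTailCopy (tauC 1 '' s) (tauC 1 i, true) ↔ i ∈ s :=
  ⟨fun h => tauC_injective.mem_set_image.mp h.2, fun hi => ⟨rfl, i, hi, rfl⟩⟩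

lemma mk_tauC_eq_mk_tauC_of_glued (hT : (T ∩ Γ).Nonempty) (hij : j = i + 1 ∨ i = j + 1)
    (hs : sigC 1 (max i j) ∈ T) {b b' : Bool} {hi : tauC 1 i ∈ T} {hj : tauC 1 j ∈ T} :
    mk A Γ (tauC 1 i, b) hi = mk A Γ (tauC 1 j, b') hj :=
  (mk_eq_mk_of_glued (q := (sigC 1 (max i j), b)) (hq := hs) hT
    (Or.inl (tauC_le_sigC_iff.mpr (by omega)))).trans
    (mk_eq_mk_of_glued hT (Or.inr (tauC_le_sigC_iff.mpr (by omega))))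

lemma mk_tauC_eq_mk_tauC_add_of_glued (hk : |k| = 2) (hΓ : (thicken S 2 ∩ Γ).Nonempty)
    (hi : tauC 1 i ∈ S) (b b' : Bool) :
    mk A Γ (tauC 1 i, b) (self_subset_thicken S 2 hi) =
      mk A Γ (tauC 1 (i + k), b') (tauC_mem_thicken_of_abs_sub_le hi (by simp [hk])) := by
  have hk' : k = 2 ∨ k = -2 := (abs_eq zero_le_two).mp hk
  have hmid : tauC 1 (i + k / 2) ∈ thicken S 1 :=
    tauC_mem_thicken_of_abs_sub_le hi (by rcases hk' with rfl | rfl <;> norm_num)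
  calc _ = mk A Γ (tauC 1 (i + k / 2), b) (thicken_le S one_le_two hmid) :=
        mk_tauC_eq_mk_tauC_of_glued hΓ (by omega) (thicken_le S one_le_two
          (mem_thicken_one hi (tauC_le_sigC_iff.mpr (by omega)) le_rfl))
    _ = _ := mk_tauC_eq_mk_tauC_of_glued hΓ (by omega)
          (mem_thicken_one hmid (tauC_le_sigC_iff.mpr (by omega)) le_rfl)

open Classical in
noncomputable def shiftTail (s : Set ℤ) (k : ℤ) (p : CoverPoset 1 × Bool) : CoverPoset 1 × Bool :=
  if h : IsTailCopy (tauC 1 '' s) p then (tauC 1 (h.2.choose + k), true) else (p.1, false)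

lemma shiftTail_tauC (hi : i ∈ s) : shiftTail s k (tauC 1 i, true) = (tauC 1 (i + k), true) := by
  have h : IsTailCopy (tauC 1 '' s) (tauC 1 i, true) := isTailCopy_tauC_iff.mpr hi
  rw [shiftTail, dif_pos h, tauC_injective h.2.choose_spec.2]

lemma shiftTail_of_not_isTailCopy (h : ¬ IsTailCopy (tauC 1 '' s) p) :
    shiftTail s k p = (p.1, false) :=
  dif_neg h

lemma shiftTail_mem_thicken (hk : |k| = 2) (hp : p.1 ∈ S) : (shiftTail s k p).1 ∈ thicken S 2 := by
  by_cases h : IsTailCopy (tauC 1 '' s) p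
  · obtain ⟨i, hi, rfl⟩ := isTailCopy_image_tauC_iff.mp h
    rw [shiftTail_tauC hi]
    exact tauC_mem_thicken_of_abs_sub_le hp (by simp [hk])
  · rw [shiftTail_of_not_isTailCopy h]
    exact self_subset_thicken S 2 hp

lemma mk_shiftTail_of_glued (hk : |k| = 2) (hΓ : (thicken S 2 ∩ Γ).Nonempty) (hp : p.1 ∈ S) :
    mk A Γ (shiftTail s k p) (shiftTail_mem_thicken hk hp) =
      mk A Γ (p.1, false) (self_subset_thicken S 2 hp) := by
  by_cases h : IsTailCopy (tauC 1 '' s) p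
  · obtain ⟨i, hi, rfl⟩ := isTailCopy_image_tauC_iff.mp h
    exact (mk_congr (shiftTail_tauC hi)).trans (mk_tauC_eq_mk_tauC_add_of_glued hk hΓ hp _ _).symm
  · exact mk_congr (shiftTail_of_not_isTailCopy h)

lemma mk_shiftTail_eq_of_tailLink (hk : |k| = 2)
    (hΓ : (S ∩ Γ).Nonempty → (thicken S 2 ∩ Γ').Nonempty)
    {v w : {p : CoverPoset 1 × Bool // p.1 ∈ S}}
    (hvw : TailLink (tauC 1 '' s) Γ S v w) :
    mk A Γ' (shiftTail s k v.1) (shiftTail_mem_thicken hk v.2) =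
      mk A Γ' (shiftTail s k w.1) (shiftTail_mem_thicken hk w.2) := by
  obtain ⟨hcmp, hiff | hglue⟩ := hvw
  · by_cases hv : IsTailCopy (tauC 1 '' s) v.1
    · obtain ⟨i, -, hvi⟩ := isTailCopy_image_tauC_iff.mp hv
      obtain ⟨j, -, hwj⟩ := isTailCopy_image_tauC_iff.mp (hiff.mp hv)
      rw [hvi, hwj] at hcmp
      obtain rfl : i = j := hcmp.elim tauC_le_tauC_iff.mp fun h => (tauC_le_tauC_iff.mp h).symm
      obtain rfl : v = w := Subtype.ext (hvi.trans hwj.symm)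
      rfl
    · have hw : ¬ IsTailCopy (tauC 1 '' s) w.1 := fun h => hv (hiff.mpr h)
      rw [mk_congr (shiftTail_of_not_isTailCopy hv), mk_congr (shiftTail_of_not_isTailCopy hw)]
      exact mk_eq_mk_of_isTailCopy_iff hcmp
        (iff_of_false (not_isTailCopy_false _) (not_isTailCopy_false _))
  · rw [mk_shiftTail_of_glued hk (hΓ hglue) v.2, mk_shiftTail_of_glued hk (hΓ hglue) w.2]
    exact mk_eq_mk_of_glued (hΓ hglue) hcmp

noncomputable def shiftMap (s : Set ℤ) (k : ℤ) (hk : |k| = 2)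
    (hΓ : ∀ S : Set (CoverPoset 1), (S ∩ Γ).Nonempty → (thicken S 2 ∩ Γ').Nonempty)
    (S : Set (CoverPoset 1)) :
    (tailCosheaf (tauC 1 '' s) Γ).obj S → (tailCosheaf A Γ').obj (thicken S 2) :=
  fun a => ULift.up <| Quot.lift (fun v : {p : CoverPoset 1 × Bool // p.1 ∈ S} =>
      Quot.mk (TailLink A Γ' (thicken S 2)) ⟨shiftTail s k v.1, shiftTail_mem_thicken hk v.2⟩)
    -- any universe will do here: the equation is one between the underlying quotients
    (fun _ _ hvw => congrArg ULift.down.{0} (mk_shiftTail_eq_of_tailLink hk (hΓ S) hvw)) a.down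

lemma shiftMap_mk (hk : |k| = 2)
    (hΓ : ∀ S : Set (CoverPoset 1), (S ∩ Γ).Nonempty → (thicken S 2 ∩ Γ').Nonempty)
    (hp : p.1 ∈ S) :
    shiftMap (A := A) s k hk hΓ S (mk _ Γ p hp) =
      mk A Γ' (shiftTail s k p) (shiftTail_mem_thicken hk hp) :=
  rfl

lemma map_shiftMap_shiftMap (hk : |k| = 2) (hk' : |k'| = 2) (hkk' : k + k' = 0)
    (hΓ : ∀ S : Set (CoverPoset 1), (S ∩ Γ).Nonempty → (thicken S 2 ∩ Γ').Nonempty)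
    (hΓ' : ∀ S : Set (CoverPoset 1), (S ∩ Γ').Nonempty → (thicken S 2 ∩ Γ).Nonempty)
    (hglue : ∀ i ∈ s, i + k ∉ s' →
      ∀ S : Set (CoverPoset 1), tauC 1 i ∈ S → (thicken S 2 ∩ Γ).Nonempty)
    (a : (tailCosheaf (tauC 1 '' s) Γ).obj S) :
    (tailCosheaf (tauC 1 '' s) Γ).map (thicken_thicken S 2 2).subset
        (shiftMap s' k' hk' hΓ' (thicken S 2) (shiftMap s k hk hΓ S a)) =
      (tailCosheaf (tauC 1 '' s) Γ).map (self_subset_thicken S (2 + 2)) a := by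
  obtain ⟨p, hp, rfl⟩ := exists_eq_mk a
  rw [shiftMap_mk, shiftMap_mk, map_mk, map_mk]
  by_cases h : IsTailCopy (tauC 1 '' s) p
  · obtain ⟨i, hi, rfl⟩ := isTailCopy_image_tauC_iff.mp h
    rw [mk_congr (congrArg (shiftTail s' k') (shiftTail_tauC hi))]
    by_cases hik : i + k ∈ s'
    · exact mk_congr (by rw [shiftTail_tauC hik, add_assoc, hkk', add_zero])
    · rw [mk_congr (shiftTail_of_not_isTailCopy (isTailCopy_tauC_iff.not.mpr hik))]
      exact congrArg ((tailCosheaf (tauC 1 '' s) Γ).map (thicken_le S (by norm_num : 2 ≤ 2 + 2)))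
        (mk_tauC_eq_mk_tauC_add_of_glued hk (hglue i hi hik S hp) hp true false).symm
  · rw [mk_congr (congrArg (shiftTail s' k') (shiftTail_of_not_isTailCopy h)),
      mk_congr (shiftTail_of_not_isTailCopy (not_isTailCopy_false _))]
    exact (mk_eq_mk_false h).symm

theorem isInterleaving_two_of_shift
    (hΓ : ∀ S : Set (CoverPoset 1), (S ∩ Γ).Nonempty → (thicken S 2 ∩ Γ').Nonempty)
    (hΓ' : ∀ S : Set (CoverPoset 1), (S ∩ Γ').Nonempty → (thicken S 2 ∩ Γ).Nonempty)
    (hs : ∀ i ∈ s, i + 2 ∉ s' →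
      ∀ S : Set (CoverPoset 1), tauC 1 i ∈ S → (thicken S 2 ∩ Γ).Nonempty)
    (hs' : ∀ j ∈ s', j - 2 ∉ s →
      ∀ S : Set (CoverPoset 1), tauC 1 j ∈ S → (thicken S 2 ∩ Γ').Nonempty) :
    IsInterleaving (tailCosheaf (tauC 1 '' s) Γ) (tailCosheaf (tauC 1 '' s') Γ') 2 := by
  have h₂ : |(2 : ℤ)| = 2 := abs_two
  have h₂' : |(-2 : ℤ)| = 2 := by norm_num
  refine ⟨shiftMap s 2 h₂ hΓ, shiftMap s' (-2) h₂' hΓ', ?_, ?_, ?_, ?_⟩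
  · intro S T _ _ h a
    obtain ⟨p, hp, rfl⟩ := exists_eq_mk a
    rfl
  · intro S T _ _ h a
    obtain ⟨p, hp, rfl⟩ := exists_eq_mk a
    rfl
  · exact fun S _ => map_shiftMap_shiftMap h₂ h₂' (by norm_num) hΓ hΓ' hs
  · exact fun S _ => map_shiftMap_shiftMap h₂' h₂ (by norm_num) hΓ' hΓ
      (by simpa only [← sub_eq_add_neg] using hs')

end Shift

section Example

open tailCosheaf

def beyond (t : ℝ) : Set (CoverPoset 1) := {c | ((c : Set ℝ) ∩ Ioi t).Nonempty}

lemma Ioo_inter_Ioi_nonempty_iff {a b t : ℝ} (hab : a < b) :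
    (Ioo a b ∩ Ioi t).Nonempty ↔ t < b := by
  rw [Ioo_inter_Ioi, nonempty_Ioo, max_lt_iff]
  simp [hab]

lemma sigC_mem_beyond_iff {t : ℝ} {i : ℤ} : sigC 1 i ∈ beyond t ↔ t < i + 1 := by
  change ((sigC 1 i : Set ℝ) ∩ Ioi t).Nonempty ↔ _
  rw [coe_sigC, Ioo_inter_Ioi_nonempty_iff (by linarith)]

lemma tauC_mem_beyond_iff {t : ℝ} {i : ℤ} : tauC 1 i ∈ beyond t ↔ t < i + 1 := by
  change ((tauC 1 i : Set ℝ) ∩ Ioi t).Nonempty ↔ _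
  rw [coe_tauC, Ioo_inter_Ioi_nonempty_iff (by linarith)]

lemma beyond_anti {t t' : ℝ} (h : t ≤ t') : beyond t' ⊆ beyond t :=
  fun _ ⟨x, hx, hxt⟩ => ⟨x, hx, h.trans_lt hxt⟩

lemma thicken_two_inter_beyond_nonempty {S : Set (CoverPoset 1)} {t : ℝ}
    (h : (S ∩ beyond t).Nonempty) : (thicken S 2 ∩ beyond (t + 1)).Nonempty := by
  obtain ⟨c, hcS, hct⟩ := h
  rcases c.eq_sigC_or_eq_tauC with ⟨i, rfl⟩ | ⟨i, rfl⟩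
  · refine ⟨sigC 1 (i + 1), mem_thicken_one (mem_thicken_one hcS le_rfl (tauC_le_sigC i))
      (tauC_le_sigC_add_one i) le_rfl, sigC_mem_beyond_iff.mpr ?_⟩
    push_cast
    linarith [sigC_mem_beyond_iff.mp hct]
  · refine ⟨sigC 1 (i + 1), thicken_le S one_le_two
      (mem_thicken_one hcS (tauC_le_sigC_add_one i) le_rfl), sigC_mem_beyond_iff.mpr ?_⟩
    push_cast
    linarith [tauC_mem_beyond_iff.mp hct]

def exF : MapperCosheaf (CoverPoset 1) := tailCosheaf (tauC 1 '' Icc 1 5) (beyond 6)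

def exG : MapperCosheaf (CoverPoset 1) := tailCosheaf (tauC 1 '' Icc 3 6) (beyond 7)

lemma exF_exG_isInterleaving : IsInterleaving exF exG 2 := by
  refine isInterleaving_two_of_shift (fun _ h => ?_) (fun S h => ?_) (fun i hi hi' S hS => ?_)
    (fun j hj hj' => absurd (by simp only [mem_Icc] at hj ⊢; omega) hj')
  · simpa [show (6 : ℝ) + 1 = 7 by norm_num] using thicken_two_inter_beyond_nonempty h
  · obtain ⟨c, hcS, hc⟩ := h
    exact ⟨c, self_subset_thicken S 2 hcS, beyond_anti (by norm_num) hc⟩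
  · obtain rfl : i = 5 := by simp only [mem_Icc] at hi hi'; omega
    exact ⟨sigC 1 6, thicken_le S one_le_two (mem_thicken_one hS (tauC_le_sigC_add_one 5) le_rfl),
      sigC_mem_beyond_iff.mpr (by norm_num)⟩

local notation "Sσ₁" => downSet ({sigC 1 1} : Set (CoverPoset 1))

lemma thicken_sσ₁_subset_Ioo (n : ℕ) :
    ∀ c ∈ thicken Sσ₁ n, (c : Set ℝ) ⊆ Ioo (-n) (2 + n) := by
  have hSσ₁ : ∀ c ∈ Sσ₁, (c : Set ℝ) ⊆ Ioo 0 2 := by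
    rintro c ⟨_, hd, hcd⟩
    rw [mem_singleton_iff.mp hd, CoverPoset.le_iff_subset, coe_sigC] at hcd
    norm_num at hcd
    exact hcd
  simpa using thicken_subset_Ioo hSσ₁ n

lemma disjoint_thicken_sσ₁_beyond {n : ℕ} (hn : n ≤ 4) : Disjoint (thicken Sσ₁ n) (beyond 6) := by
  refine disjoint_left.mpr fun c hc ⟨x, hxc, hx⟩ => ?_
  have hn' : (n : ℝ) ≤ 4 := by exact_mod_cast hn
  linarith [(thicken_sσ₁_subset_Ioo n c hc hxc).2, mem_Ioi.mp hx]

lemma disjoint_thicken_sσ₁_tails {n : ℕ} (hn : n ≤ 1) :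
    Disjoint (thicken Sσ₁ n) (tauC 1 '' Icc 3 6) := by
  rintro T hT hT' c hc
  obtain ⟨i, hi, rfl⟩ := hT' hc
  have hsub := thicken_sσ₁_subset_Ioo n _ (hT hc)
  rw [coe_tauC, Ioo_subset_Ioo_iff (by linarith)] at hsub
  have hn' : (n : ℝ) ≤ 1 := by exact_mod_cast hn
  have hi' : (3 : ℝ) ≤ i := by exact_mod_cast hi.1
  linarith [hsub.2]

lemma subsingleton_exG_obj_thicken {n : ℕ} (hn : n ≤ 1) : Subsingleton (exG.obj (thicken Sσ₁ n)) :=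
  subsingleton_obj_thicken _ (disjoint_thicken_sσ₁_tails hn)

def xF : exF.obj Sσ₁ := mk _ _ (tauC 1 1, true) ⟨sigC 1 1, rfl, tauC_le_sigC 1⟩

def zF : exF.obj Sσ₁ := mk _ _ (sigC 1 1, false) ⟨sigC 1 1, rfl, le_rfl⟩

lemma eq_xF_or_eq_zF (a : exF.obj Sσ₁) : a = xF ∨ a = zF := by
  obtain ⟨p, ⟨_, hd, hp⟩, rfl⟩ := exists_eq_mk a
  rw [mem_singleton_iff.mp hd] at hp
  by_cases h : IsTailCopy (tauC 1 '' Icc 1 5) p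
  · obtain ⟨i, hi, rfl⟩ := isTailCopy_image_tauC_iff.mp h
    obtain rfl : i = 1 := by
      have := tauC_le_sigC_iff.mp hp
      simp only [mem_Icc] at hi
      omega
    exact Or.inl rfl
  · exact Or.inr (mk_eq_mk_of_isTailCopy_iff (Or.inl hp) (iff_of_false h (not_isTailCopy_false _)))

lemma map_xF_ne_map_zF {T : Set (CoverPoset 1)} (h : Sσ₁ ⊆ T) (hT : Disjoint T (beyond 6)) :
    exF.map h xF ≠ exF.map h zF := fun heq =>
  not_isTailCopy_false _ ((isTailCopy_iff_of_mk_eq hT heq).mp ⟨rfl, 1, by norm_num, rfl⟩)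

lemma fdist_map_xF_map_zF :
    fdist exF (thicken Sσ₁ 2) (exF.map (self_subset_thicken Sσ₁ 2) xF)
      (exF.map (self_subset_thicken Sσ₁ 2) zF) = 3 := by
  refine le_antisymm (fdist_le_coe_iff.mpr ?_) ?_
  · have hσ₆ : sigC 1 6 ∈ thicken (thicken Sσ₁ 2) 3 := by
      rw [thicken_thicken]
      exact mem_thicken_one (tauC_mem_thicken_of_abs_sub_le (S := Sσ₁) (i := 1) (j := 5) (n := 4)
        ⟨sigC 1 1, rfl, tauC_le_sigC 1⟩ (by norm_num)) (tauC_le_sigC_add_one 5) le_rfl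
    exact mk_eq_mk_of_glued ⟨_, hσ₆, sigC_mem_beyond_iff.mpr (by norm_num)⟩
      (Or.inl (tauC_le_sigC 1))
  · refine le_of_not_gt fun hlt => ?_
    have h₂ : _ ≤ ((2 : ℕ) : ℕ∞) := Order.le_of_lt_add_one (hlt.trans_eq (by norm_num))
    rw [fdist_le_coe_iff, exF.map_comp, exF.map_comp] at h₂
    refine map_xF_ne_map_zF _ ?_ h₂
    rw [thicken_thicken]
    exact disjoint_thicken_sσ₁_beyond le_rfl

end Example

/-- There is a pair of mapper cosheaves `F`, `G` (the example of the paper: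
`F` has exactly two tails `x, z` at level `σ₁` whose images in the
`2`-thickening are at distance `3`, and `G` has a single component `[y]` over
the `1`-thickening of that level) such that every `1`-assignment `(φ,ψ)` has
loss `L_B(φ,ψ) ≥ 2` — hence the bound `1 + L_B(φ,ψ) ≥ 3` — while the
interleaving distance is `d_I(F,G) = 2`: the optimal bound for `n = 1`
strictly exceeds the interleaving distance. -/
theorem exists_example_requiring_search :
    ∃ F G : MapperCosheaf (CoverPoset 1),
      (∃ x z : F.obj (downSet {sigC 1 1}), x ≠ z ∧ (∀ w, w = x ∨ w = z) ∧
        fdist F (thicken (downSet {sigC 1 1}) 2)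
          (F.map (self_subset_thicken (downSet {sigC 1 1}) 2) x)
          (F.map (self_subset_thicken (downSet {sigC 1 1}) 2) z) = 3) ∧
      (∃ y : G.obj (thicken (downSet {sigC 1 1}) 1), ∀ y', y' = y) ∧
      (∀ (φ : ∀ S : Set (CoverPoset 1), F.obj S → G.obj (thicken S 1))
         (ψ : ∀ S : Set (CoverPoset 1), G.obj S → F.obj (thicken S 1)),
        (2 : ℕ∞) ≤ assignmentLoss F G 1 φ ψ) ∧
      interleavingDist F G = 2 := by
  have hSσ₁ : downSet (downSet {sigC 1 1}) = downSet {sigC 1 1} := downSet_downSet _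
  refine ⟨exF, exG, ⟨xF, zF, fun h => ?_, eq_xF_or_eq_zF, fdist_map_xF_map_zF⟩, ?_,
    fun φ ψ => ?_, ?_⟩
  · exact map_xF_ne_map_zF subset_rfl (disjoint_thicken_sσ₁_beyond (n := 0) (by norm_num))
      (congrArg _ h)
  · have := subsingleton_exG_obj_thicken (n := 1) le_rfl
    exact ⟨tailCosheaf.mk _ _ (sigC 1 1, false) (self_subset_thicken _ 1 ⟨_, rfl, le_rfl⟩),
      fun _ => Subsingleton.elim _ _⟩
  · have := subsingleton_exG_obj_thicken (n := 1) le_rfl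
    calc (2 : ℕ∞) = ceilHalf 3 := rfl
      _ = _ := by rw [← fdist_map_xF_map_zF]
      _ ≤ _ := ceilHalf_fdist_le_assignmentLoss φ ψ hSσ₁ xF zF
  · refine (interleavingDist_eq_of_isInterleaving (n := 2) exF_exG_isInterleaving
      fun m hm => ?_).trans Nat.cast_ofNat
    have := subsingleton_exG_obj_thicken (n := m) (by omega)
    exact not_isInterleaving_of_subsingleton hSσ₁
      (map_xF_ne_map_zF _ (disjoint_thicken_sσ₁_beyond (by omega)))
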